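/- There is a universal constant C such that for every AND-OR formula φ (with AND and OR gates of arbitrary fan-in), there exists an AND-OR formula φ' computing the same boolean function on the same variables, having the same size (number of leaves), in which every gate has fan-in at most two, and satisfying σ_-(φ') ≤ C · σ_-(φ). -/

import Mathlib

noncomputable section

/-- An AND-OR formula: a rooted tree whose internal vertices are AND or OR gates of
arbitrary fan-in and whose leaves are distinct input variables. -/
inductive AOF : Type where
  | leaf : AOF
  | and : (k : ℕ) → (Fin k → AOF) → AOF
  | or : (k : ℕ) → (Fin k → AOF) → AOF

namespace AOF

/-- The set of leaves (input variables). -/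
def Leaf : AOF → Type
  | leaf => Unit
  | and k c => Σ j : Fin k, (c j).Leaf
  | or k c => Σ j : Fin k, (c j).Leaf

/-- The size (number of leaves). -/
def size : AOF → ℕ
  | leaf => 1
  | and k c => ∑ j : Fin k, (c j).size
  | or k c => ∑ j : Fin k, (c j).size

/-- The read-once boolean function computed by the formula. -/
def eval : ∀ φ : AOF, (φ.Leaf → Bool) → Bool
  | leaf, x => x ()
  | and k c, x => decide (∀ j : Fin k, (c j).eval (fun i => x ⟨j, i⟩) = true)
  | or k c, x => decide (∃ j : Fin k, (c j).eval (fun i => x ⟨j, i⟩) = true)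

/-- Every gate has fan-in at most two. -/
def FanInLeTwo : AOF → Prop
  | leaf => True
  | and k c => k ≤ 2 ∧ ∀ j, (c j).FanInLeTwo
  | or k c => k ≤ 2 ∧ ∀ j, (c j).FanInLeTwo

/-- `σ_-(φ)`: the maximum over simple paths `ξ` from the root down to a leaf of
`Σ_{w ∈ ξ} 1/√(s_w)` (using that the adversary bound of a size-`s` AND-OR formula
is `√s`). -/
def sigmaMinus : AOF → ℝ
  | leaf => 1
  | and k c => 1 / Real.sqrt ((AOF.and k c).size) + ⨆ j : Fin k, (c j).sigmaMinus
  | or k c => 1 / Real.sqrt ((AOF.or k c).size) + ⨆ j : Fin k, (c j).sigmaMinus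

end AOF

/-!
Each gate of fan-in `k` is replaced by a binary tree of gates of the same kind whose leaves are
its (recursively binarized) children, built by splitting the children at a weighted median `p`:
the children before `p` and those after `p` each carry at most half of the total size. Along any
path from the root of this tree to a child, node sizes therefore at least halve every two levels,
so the extra terms `1/√s_w` contributed by the new nodes form a geometric series bounded by a
constant times `1/√s` for the size `s` of the child reached. This is absorbed by the induction
hypothesis `σ_-(φ') + 9/√s ≤ 10 σ_-(φ)`, which gives the theorem with `C = 10`. Empty sides of a
split are filled with the empty gate, which is neutral for the gate and has size `0`.
-/

open Finset

theorem Bool.eq_of_eq_iff_eq {a b : Bool} (g : Bool) (h : a = g ↔ b = g) : a = b := by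
  cases a <;> cases b <;> cases g <;> simp_all

def Equiv.sigmaFinTwo (F : Fin 2 → Type) : (Σ j, F j) ≃ F 0 ⊕ F 1 where
  toFun
    | ⟨0, v⟩ => .inl v
    | ⟨1, v⟩ => .inr v
  invFun
    | .inl v => ⟨0, v⟩
    | .inr v => ⟨1, v⟩
  left_inv := by rintro ⟨j, v⟩; fin_cases j <;> rfl
  right_inv := by rintro (v | v) <;> rfl

namespace Finset

variable {α : Type} [LinearOrder α] {s : Finset α} {p : α}

theorem filter_lt_union_singleton_union_filter_gt (hp : p ∈ s) :
    {i ∈ s | i < p} ∪ ({p} ∪ {i ∈ s | p < i}) = s := by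
  ext i
  simp only [mem_union, mem_filter, mem_singleton]
  rcases lt_trichotomy i p with h | rfl | h <;> simp_all [lt_asymm]

theorem disjoint_singleton_filter_gt : Disjoint {p} {i ∈ s | p < i} := by
  simp

theorem disjoint_filter_lt_singleton_union_filter_gt :
    Disjoint {i ∈ s | i < p} ({p} ∪ {i ∈ s | p < i}) := by
  simp only [disjoint_union_right, disjoint_singleton_right, mem_filter, lt_irrefl, and_false,
    not_false_eq_true, true_and]
  exact disjoint_filter.2 fun i _ h h' => lt_asymm h h'

theorem sum_eq_sum_filter_lt_add_add_sum_filter_gt {M : Type*} [AddCommMonoid M] (w : α → M)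
    (hp : p ∈ s) :
    ∑ i ∈ s, w i = ∑ i ∈ s with i < p, w i + (w p + ∑ i ∈ s with p < i, w i) := by
  conv_lhs => rw [← filter_lt_union_singleton_union_filter_gt hp]
  rw [sum_union disjoint_filter_lt_singleton_union_filter_gt,
    sum_union disjoint_singleton_filter_gt, sum_singleton]

theorem exists_weighted_median (w : α → ℕ) (hs : s.Nonempty) :
    ∃ p ∈ s, 2 * ∑ i ∈ s with i < p, w i ≤ ∑ i ∈ s, w i ∧
      2 * ∑ i ∈ s with p < i, w i ≤ ∑ i ∈ s, w i := by
  set S := ∑ i ∈ s, w i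
  set P := {p ∈ s | S ≤ 2 * ∑ i ∈ s with i ≤ p, w i}
  have hP : P.Nonempty := ⟨s.max' hs, mem_filter.2 ⟨max'_mem s hs, by
    rw [filter_true_of_mem fun i hi => le_max' s i hi]; omega⟩⟩
  obtain ⟨hps, hpS⟩ := mem_filter.1 (P.min'_mem hP)
  refine ⟨P.min' hP, hps, ?_, ?_⟩
  · by_contra! hlt
    have hL : {i ∈ s | i < P.min' hP}.Nonempty := by
      by_contra hL
      rw [not_nonempty_iff_eq_empty.1 hL, sum_empty] at hlt
      omega
    obtain ⟨hqs, hqp⟩ := mem_filter.1 (max'_mem _ hL)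
    have hq : {i ∈ s | i ≤ max' _ hL} = {i ∈ s | i < P.min' hP} := filter_congr fun i hi =>
      ⟨fun h => h.trans_lt hqp, fun h => le_max' _ i (mem_filter.2 ⟨hi, h⟩)⟩
    have hqP : max' _ hL ∈ P := mem_filter.2 ⟨hqs, by rw [hq]; omega⟩
    exact (P.min'_le _ hqP).not_gt hqp
  · have := sum_filter_add_sum_filter_not s (P.min' hP < ·) w
    simp only [not_lt] at this
    omega

end Finset

def invSqrt (n : ℕ) : ℝ := 1 / √(n : ℝ)

theorem invSqrt_nonneg (n : ℕ) : 0 ≤ invSqrt n := by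
  unfold invSqrt; positivity

theorem invSqrt_zero : invSqrt 0 = 0 := by
  simp [invSqrt]

theorem invSqrt_le_invSqrt {m n : ℕ} (hm : 0 < m) (h : m ≤ n) : invSqrt n ≤ invSqrt m :=
  one_div_le_one_div_of_le (Real.sqrt_pos.2 (by exact_mod_cast hm))
    (Real.sqrt_le_sqrt (by exact_mod_cast h))

theorem four_mul_invSqrt_le {m n : ℕ} (hm : 0 < m) (h : 2 * m ≤ n) :
    4 * invSqrt n ≤ 3 * invSqrt m := by
  have hm' : 0 < √(m : ℝ) := Real.sqrt_pos.2 (by exact_mod_cast hm)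
  have hn' : 0 < √(n : ℝ) := Real.sqrt_pos.2 (by exact_mod_cast (by omega : 0 < n))
  rw [invSqrt, invSqrt, mul_one_div, mul_one_div, div_le_div_iff₀ hn' hm']
  have h' : (2 * m : ℝ) ≤ n := by exact_mod_cast h
  nlinarith [Real.sq_sqrt (Nat.cast_nonneg (α := ℝ) m), Real.sq_sqrt (Nat.cast_nonneg (α := ℝ) n)]

namespace AOF

def gate : Bool → (k : ℕ) → (Fin k → AOF) → AOF
  | true => .and
  | false => .or

def gate₂ (g : Bool) (a b : AOF) : AOF := gate g 2 ![a, b]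

def unitGate (g : Bool) : AOF := gate g 0 ![]

theorem induction_gate {P : AOF → Prop} (leaf : P .leaf)
    (gate : ∀ g k c, (∀ j, P (c j)) → P (gate g k c)) : ∀ φ, P φ
  | .leaf => leaf
  | .and k c => gate true k c fun j => induction_gate leaf gate (c j)
  | .or k c => gate false k c fun j => induction_gate leaf gate (c j)

def leafGateEquiv (g : Bool) (k : ℕ) (c : Fin k → AOF) :
    (gate g k c).Leaf ≃ Σ j, (c j).Leaf := by
  cases g <;> exact Equiv.refl _

theorem eval_gate_eq_iff (g : Bool) (k : ℕ) (c : Fin k → AOF) (x : (Σ j, (c j).Leaf) → Bool) :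
    (gate g k c).eval (x ∘ leafGateEquiv g k c) = g ↔
      ∀ j, (c j).eval (fun v => x ⟨j, v⟩) = g := by
  cases g <;> simp [gate, eval] <;> exact Iff.rfl

theorem size_gate (g : Bool) (k : ℕ) (c : Fin k → AOF) :
    (gate g k c).size = ∑ j, (c j).size := by
  cases g <;> rfl

theorem size_gate₂ (g : Bool) (a b : AOF) : (gate₂ g a b).size = a.size + b.size := by
  simp [gate₂, size_gate, Fin.sum_univ_two]

theorem fanInLeTwo_gate (g : Bool) (k : ℕ) (c : Fin k → AOF) :
    (gate g k c).FanInLeTwo ↔ k ≤ 2 ∧ ∀ j, (c j).FanInLeTwo := by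
  cases g <;> rfl

theorem fanInLeTwo_gate₂ {g : Bool} {a b : AOF} :
    (gate₂ g a b).FanInLeTwo ↔ a.FanInLeTwo ∧ b.FanInLeTwo := by
  simp [gate₂, fanInLeTwo_gate, Fin.forall_fin_two]

theorem fanInLeTwo_unitGate (g : Bool) : (unitGate g).FanInLeTwo := by
  simp [unitGate, fanInLeTwo_gate]

theorem sigmaMinus_gate (g : Bool) (k : ℕ) (c : Fin k → AOF) :
    (gate g k c).sigmaMinus = invSqrt (gate g k c).size + ⨆ j, (c j).sigmaMinus := by
  cases g <;> rfl

theorem sigmaMinus_gate₂ (g : Bool) (a b : AOF) :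
    (gate₂ g a b).sigmaMinus = invSqrt (gate₂ g a b).size + max a.sigmaMinus b.sigmaMinus := by
  rw [gate₂, sigmaMinus_gate]
  congr 1
  exact le_antisymm (ciSup_le (Fin.forall_fin_two.2 ⟨le_max_left _ _, le_max_right _ _⟩))
    (max_le (le_ciSup (f := fun j => (![a, b] j).sigmaMinus) (Finite.bddAbove_range _) 0)
      (le_ciSup (f := fun j => (![a, b] j).sigmaMinus) (Finite.bddAbove_range _) 1))

theorem sigmaMinus_nonneg (φ : AOF) : 0 ≤ φ.sigmaMinus := by
  induction φ using induction_gate with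
  | leaf => exact zero_le_one
  | gate g k c ih =>
    rw [sigmaMinus_gate]
    exact add_nonneg (invSqrt_nonneg _) (Real.iSup_nonneg ih)

theorem sigmaMinus_eq_zero_of_size_eq_zero {φ : AOF} (h : φ.size = 0) : φ.sigmaMinus = 0 := by
  induction φ using induction_gate with
  | leaf => exact absurd h one_ne_zero
  | gate g k c ih =>
    rw [size_gate, sum_eq_zero_iff] at h
    rw [sigmaMinus_gate, size_gate, sum_eq_zero fun j _ => h j (mem_univ j), invSqrt_zero,
      zero_add]
    simp_rw [fun j => ih j (h j (mem_univ j))]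
    exact Real.iSup_const_zero

/-- Since `invSqrt 0 = 0`, the bounds on `invSqrt` only hold for positive sizes; the path realising
`σ_-` can always be taken through children of positive size, as formulas of size `0` have
`σ_- = 0`. -/
theorem exists_sigmaMinus_gate₂_le {g : Bool} {a b : AOF} (h : 0 < (gate₂ g a b).size) :
    ∃ P, (P = a ∨ P = b) ∧ 0 < P.size ∧
      (gate₂ g a b).sigmaMinus ≤ invSqrt (gate₂ g a b).size + P.sigmaMinus := by
  suffices ∃ P, (P = a ∨ P = b) ∧ 0 < P.size ∧ max a.sigmaMinus b.sigmaMinus ≤ P.sigmaMinus by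
    obtain ⟨P, hP, hP0, hPσ⟩ := this
    exact ⟨P, hP, hP0, by rw [sigmaMinus_gate₂]; linarith⟩
  rw [size_gate₂] at h
  rcases Nat.eq_zero_or_pos a.size with ha | ha
  · rw [sigmaMinus_eq_zero_of_size_eq_zero ha]
    exact ⟨b, .inr rfl, by omega, max_le (sigmaMinus_nonneg b) le_rfl⟩
  rcases Nat.eq_zero_or_pos b.size with hb | hb
  · rw [sigmaMinus_eq_zero_of_size_eq_zero hb]
    exact ⟨a, .inl rfl, ha, max_le le_rfl (sigmaMinus_nonneg a)⟩
  rcases le_total a.sigmaMinus b.sigmaMinus with hab | hab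
  · exact ⟨b, .inr rfl, hb, max_le hab le_rfl⟩
  · exact ⟨a, .inl rfl, ha, max_le le_rfl hab⟩

def Equivalent (φ' φ : AOF) : Prop :=
  ∃ e : φ'.Leaf ≃ φ.Leaf, ∀ x : φ.Leaf → Bool, φ'.eval (x ∘ e) = φ.eval x

/-- `T` is, up to relabelling its leaves, the `g`-gate over the family `c`. A Boolean is
determined by whether it equals `g`, and `eval = g ↔ ∀ children, eval = g` describes the AND gate
for `g = true` and the OR gate for `g = false`. -/
def Represents (g : Bool) (T : AOF) {ι : Type} (c : ι → AOF) : Prop :=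
  ∃ e : T.Leaf ≃ Σ i, (c i).Leaf, ∀ x : (Σ i, (c i).Leaf) → Bool,
    T.eval (x ∘ e) = g ↔ ∀ i, (c i).eval (fun v => x ⟨i, v⟩) = g

theorem represents_gate (g : Bool) (k : ℕ) (c : Fin k → AOF) : Represents g (gate g k c) c :=
  ⟨leafGateEquiv g k c, eval_gate_eq_iff g k c⟩

theorem represents_self (g : Bool) (T : AOF) : Represents g T fun _ : Unit => T :=
  ⟨(Equiv.uniqueSigma fun _ : Unit => T.Leaf).symm, fun _ => ⟨fun h _ => h, fun h => h ()⟩⟩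

namespace Represents

variable {g : Bool} {T : AOF} {ι κ : Type} {c : ι → AOF}

theorem comp_equiv (h : Represents g T c) (e : κ ≃ ι) : Represents g T (c ∘ e) := by
  obtain ⟨eT, hT⟩ := h
  refine ⟨eT.trans (Equiv.sigmaCongrLeft e).symm, fun x => ?_⟩
  refine (hT (x ∘ (Equiv.sigmaCongrLeft e).symm)).trans
    (e.forall_congr_right.symm.trans (forall_congr' fun k => ?_))
  have hk (v : (c (e k)).Leaf) :
      (Equiv.sigmaCongrLeft (β := fun i => (c i).Leaf) e).symm ⟨e k, v⟩ = ⟨k, v⟩ := by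
    rw [Equiv.symm_apply_eq]; rfl
  simp only [Function.comp_apply, hk]

theorem gate₂ {A B : AOF} {a : ι → AOF} {b : κ → AOF} (hA : Represents g A a)
    (hB : Represents g B b) : Represents g (gate₂ g A B) (Sum.elim a b) := by
  obtain ⟨eA, hA⟩ := hA
  obtain ⟨eB, hB⟩ := hB
  let E := (Equiv.sigmaFinTwo fun j => (![A, B] j).Leaf).trans
    ((eA.sumCongr eB).trans (Equiv.sumSigmaDistrib fun s => (Sum.elim a b s).Leaf).symm)
  refine ⟨(leafGateEquiv g 2 ![A, B]).trans E,
    fun x => (eval_gate_eq_iff g 2 ![A, B] (x ∘ E)).trans ?_⟩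
  rw [Fin.forall_fin_two, Sum.forall]
  exact (hA fun q => x ⟨.inl q.1, q.2⟩).and (hB fun q => x ⟨.inr q.1, q.2⟩)

theorem equivalent {T' : AOF} {d : ι → AOF} (hT : Represents g T c) (hT' : Represents g T' d)
    (h : ∀ i, Equivalent (c i) (d i)) : Equivalent T T' := by
  choose e he using h
  obtain ⟨eT, hT⟩ := hT
  obtain ⟨eT', hT'⟩ := hT'
  refine ⟨eT.trans ((Equiv.sigmaCongrRight e).trans eT'.symm), fun x => ?_⟩
  set z := x ∘ eT'.symm
  have hx : x = z ∘ eT' := funext fun l => by simp [z]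
  conv_rhs => rw [hx]
  refine Bool.eq_of_eq_iff_eq g ((hT (z ∘ Equiv.sigmaCongrRight e)).trans
    ((forall_congr' fun i => ?_).trans (hT' z).symm))
  rw [← he i fun w => z ⟨i, w⟩]
  rfl

end Represents

variable {α : Type}

theorem Represents.union {g : Bool} [DecidableEq α] {f : α → AOF} {A B : AOF} {s t : Finset α}
    (hA : Represents g A fun i : s => f i) (hB : Represents g B fun i : t => f i)
    (hst : Disjoint s t) : Represents g (AOF.gate₂ g A B) fun i : ↥(s ∪ t) => f i := by
  convert (hA.gate₂ hB).comp_equiv (Equiv.Finset.union s t hst).symm using 1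
  exact ((Equiv.comp_symm_eq _ _ _).2 (funext (Sum.rec (fun _ => rfl) (fun _ => rfl)))).symm

theorem represents_empty (g : Bool) (f : α → AOF) :
    Represents g (unitGate g) fun i : (∅ : Finset α) => f i := by
  show Represents g (gate g 0 ![]) _
  convert (represents_gate g 0 ![]).comp_equiv (Equiv.equivOfIsEmpty (∅ : Finset α) (Fin 0))
    using 1
  funext i
  exact absurd i.2 (notMem_empty _)

theorem represents_singleton [DecidableEq α] (g : Bool) (f : α → AOF) (i : α) :
    Represents g (f i) fun j : ({i} : Finset α) => f j := by
  convert (represents_self g (f i)).comp_equiv (Equiv.ofUnique ({i} : Finset α) Unit) using 1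
  funext ⟨j, hj⟩
  obtain rfl := mem_singleton.1 hj
  rfl

section BalancedTree

variable [LinearOrder α]

def pivot (f : α → AOF) (s : Finset α) (hs : s.Nonempty) : α :=
  (exists_weighted_median (fun i => (f i).size) hs).choose

theorem pivot_spec (f : α → AOF) (s : Finset α) (hs : s.Nonempty) :
    pivot f s hs ∈ s ∧
      2 * ∑ i ∈ s with i < pivot f s hs, (f i).size ≤ ∑ i ∈ s, (f i).size ∧
      2 * ∑ i ∈ s with pivot f s hs < i, (f i).size ≤ ∑ i ∈ s, (f i).size :=
  (exists_weighted_median (fun i => (f i).size) hs).choose_spec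

def balancedTree (g : Bool) (f : α → AOF) (s : Finset α) : AOF :=
  if hs : s.Nonempty then
    gate₂ g (balancedTree g f {i ∈ s | i < pivot f s hs})
      (gate₂ g (f (pivot f s hs)) (balancedTree g f {i ∈ s | pivot f s hs < i}))
  else unitGate g
termination_by s.card
decreasing_by
  all_goals exact card_lt_card (filter_ssubset.2 ⟨_, (pivot_spec f s hs).1, lt_irrefl _⟩)

variable (g : Bool) (f : α → AOF)

theorem size_balancedTree (s : Finset α) :
    (balancedTree g f s).size = ∑ i ∈ s, (f i).size := by
  fun_induction balancedTree g f s with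
  | case1 s hs ih₁ ih₂ =>
    rw [size_gate₂, size_gate₂, ih₁, ih₂,
      ← sum_eq_sum_filter_lt_add_add_sum_filter_gt _ (pivot_spec f s hs).1]
  | case2 s hs =>
    rw [not_nonempty_iff_eq_empty.1 hs, sum_empty]
    simp [unitGate, size_gate]

theorem fanInLeTwo_balancedTree {s : Finset α} (h : ∀ i ∈ s, (f i).FanInLeTwo) :
    (balancedTree g f s).FanInLeTwo := by
  fun_induction balancedTree g f s with
  | case1 s hs ih₁ ih₂ =>
    exact fanInLeTwo_gate₂.2 ⟨ih₁ fun i hi => h i (mem_of_mem_filter i hi),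
      fanInLeTwo_gate₂.2 ⟨h _ (pivot_spec f s hs).1, ih₂ fun i hi => h i (mem_of_mem_filter i hi)⟩⟩
  | case2 => exact fanInLeTwo_unitGate g

theorem represents_balancedTree (s : Finset α) :
    Represents g (balancedTree g f s) fun i : s => f i := by
  fun_induction balancedTree g f s with
  | case1 s hs ih₁ ih₂ =>
    have h := ih₁.union ((represents_singleton g f _).union ih₂ disjoint_singleton_filter_gt)
      disjoint_filter_lt_singleton_union_filter_gt
    rwa [filter_lt_union_singleton_union_filter_gt (pivot_spec f s hs).1] at h
  | case2 s hs =>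
    rw [not_nonempty_iff_eq_empty.1 hs]
    exact represents_empty g f

theorem exists_sigmaMinus_balancedTree_le {s : Finset α} (h : 0 < (balancedTree g f s).size) :
    ∃ i ∈ s, 0 < (f i).size ∧ (balancedTree g f s).sigmaMinus +
      7 * invSqrt (balancedTree g f s).size ≤ (f i).sigmaMinus + 9 * invSqrt (f i).size := by
  fun_induction balancedTree g f s with
  | case2 s hs => simp [unitGate, size_gate] at h
  | case1 s hs ih₁ ih₂ =>
    obtain ⟨hp, hL, hR⟩ := pivot_spec f s hs
    have hsum := sum_eq_sum_filter_lt_add_add_sum_filter_gt (fun i => (f i).size) hp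
    set p := pivot f s hs
    set L := balancedTree g f {i ∈ s | i < p}
    set R := balancedTree g f {i ∈ s | p < i}
    have hLs : L.size = ∑ i ∈ s with i < p, (f i).size := size_balancedTree g f _
    have hRs : R.size = ∑ i ∈ s with p < i, (f i).size := size_balancedTree g f _
    have hI := size_gate₂ g (f p) R
    have hT := size_gate₂ g L (gate₂ g (f p) R)
    obtain ⟨P, rfl | rfl, hP, hσ⟩ := exists_sigmaMinus_gate₂_le h
    · obtain ⟨i, hi, hi0, hiσ⟩ := ih₁ hP
      refine ⟨i, mem_of_mem_filter i hi, hi0, ?_⟩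
      have := four_mul_invSqrt_le hP (by omega : 2 * L.size ≤ (gate₂ g L (gate₂ g (f p) R)).size)
      linarith [invSqrt_nonneg L.size]
    · obtain ⟨Q, rfl | rfl, hQ, hσ'⟩ := exists_sigmaMinus_gate₂_le hP
      · refine ⟨p, hp, hQ, ?_⟩
        have h₁ := invSqrt_le_invSqrt hQ
          (by omega : (f p).size ≤ (gate₂ g L (gate₂ g (f p) R)).size)
        have h₂ := invSqrt_le_invSqrt hQ (by omega : (f p).size ≤ (gate₂ g (f p) R).size)
        linarith
      · obtain ⟨i, hi, hi0, hiσ⟩ := ih₂ hQ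
        refine ⟨i, mem_of_mem_filter i hi, hi0, ?_⟩
        have h₁ := four_mul_invSqrt_le hQ
          (by omega : 2 * R.size ≤ (gate₂ g L (gate₂ g (f p) R)).size)
        have h₂ := invSqrt_le_invSqrt hQ (by omega : R.size ≤ (gate₂ g (f p) R).size)
        linarith

end BalancedTree

def binarize : AOF → AOF
  | leaf => leaf
  | and _ c => balancedTree true (fun j => binarize (c j)) univ
  | or _ c => balancedTree false (fun j => binarize (c j)) univ

theorem binarize_gate (g : Bool) (k : ℕ) (c : Fin k → AOF) :
    binarize (gate g k c) = balancedTree g (fun j => binarize (c j)) univ := by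
  cases g <;> rfl

theorem size_binarize (φ : AOF) : φ.binarize.size = φ.size := by
  induction φ using induction_gate with
  | leaf => rfl
  | gate g k c ih =>
    rw [binarize_gate, size_balancedTree, size_gate]
    exact sum_congr rfl fun j _ => ih j

theorem fanInLeTwo_binarize (φ : AOF) : φ.binarize.FanInLeTwo := by
  induction φ using induction_gate with
  | leaf => trivial
  | gate g k c ih =>
    rw [binarize_gate]
    exact fanInLeTwo_balancedTree g _ fun j _ => ih j

theorem binarize_equivalent (φ : AOF) : Equivalent φ.binarize φ := by
  induction φ using induction_gate with
  | leaf => exact ⟨Equiv.refl _, fun _ => rfl⟩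
  | gate g k c ih =>
    rw [binarize_gate]
    exact ((represents_balancedTree g _ univ).comp_equiv (Equiv.subtypeUnivEquiv mem_univ).symm
      |>.equivalent (represents_gate g k c) ih)

theorem sigmaMinus_binarize_add_le (φ : AOF) :
    φ.binarize.sigmaMinus + 9 * invSqrt φ.size ≤ 10 * φ.sigmaMinus := by
  induction φ using induction_gate with
  | leaf => norm_num [binarize, sigmaMinus, invSqrt, size]
  | gate g k c ih =>
    have hsize := size_binarize (gate g k c)
    rcases Nat.eq_zero_or_pos (gate g k c).size with h0 | hpos
    · rw [sigmaMinus_eq_zero_of_size_eq_zero (hsize.trans h0), h0, invSqrt_zero]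
      linarith [sigmaMinus_nonneg (gate g k c)]
    rw [binarize_gate] at hsize ⊢
    obtain ⟨j, -, -, hj⟩ := exists_sigmaMinus_balancedTree_le g _ (hsize ▸ hpos)
    rw [hsize, size_binarize] at hj
    have hsup := le_ciSup (f := fun j => (c j).sigmaMinus) (Finite.bddAbove_range _) j
    rw [sigmaMinus_gate]
    linarith [ih j, invSqrt_nonneg (gate g k c).size]

theorem sigmaMinus_binarize_le (φ : AOF) : φ.binarize.sigmaMinus ≤ 10 * φ.sigmaMinus := by
  linarith [sigmaMinus_binarize_add_le φ, invSqrt_nonneg φ.size]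

end AOF

theorem gate_expansion :
    ∃ C : ℝ, ∀ φ : AOF, ∃ (φ' : AOF) (e : φ'.Leaf ≃ φ.Leaf),
      (∀ x : φ.Leaf → Bool, φ'.eval (fun i => x (e i)) = φ.eval x) ∧
      φ'.size = φ.size ∧
      φ'.FanInLeTwo ∧
      φ'.sigmaMinus ≤ C * φ.sigmaMinus := by
  refine ⟨10, fun φ => ?_⟩
  obtain ⟨e, he⟩ := φ.binarize_equivalent
  exact ⟨φ.binarize, e, he, φ.size_binarize, φ.fanInLeTwo_binarize, φ.sigmaMinus_binarize_le⟩

end
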